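/- If u is a word over {0,1,2} with |u| ≥ 3 that is a factor of the Tribonacci word, then |τ(u)| ≥ |u| + 2, where τ is the Tribonacci morphism. -/

import Mathlib

/-- The Tribonacci morphism τ: 0↦01, 1↦02, 2↦0, extended to words. -/
def tau : List (Fin 3) → List (Fin 3) :=
  fun w => w.flatMap (fun a => if a = 0 then [0, 1] else if a = 1 then [0, 2] else [0])

/-- The Tribonacci word, the fixed point of τ starting with 0.
Since τⁿ(0) is a prefix of τⁿ⁺¹(0) and |τ^(n+1)(0)| > n, this is well defined. -/
def trib : ℕ → Fin 3 := fun n => (tau^[n + 1] [0]).getD n 0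

/-- `u` is a (finite, contiguous) factor of the Tribonacci word. -/
def IsFactor (u : List (Fin 3)) : Prop :=
  ∃ i : ℕ, u = (List.range u.length).map (fun j => trib (i + j))

/-!
Since `|τ 0| = |τ 1| = 2` and `|τ 2| = 1`, `|τ u| = |u| + #{letters of u other than 2}`, so it
suffices that among three consecutive letters of the Tribonacci word `t` at most one is a `2`.
Every block `01`, `02`, `0` of a `τ`-image starts with `0`, so a `τ`-image never has two
adjacent nonzero letters. In `τ w` for such a `w`, a `2` comes from a `1` of `w`, which is
followed by `0`, so the `2` is followed by `τ 0 = 01`. As `t = τ (τ t)`, no two `2`s of `t`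
lie within distance two.
-/

@[simp] lemma tau_nil : tau [] = [] := rfl
@[simp] lemma tau_cons_zero (w : List (Fin 3)) : tau (0 :: w) = 0 :: 1 :: tau w := rfl
@[simp] lemma tau_cons_one (w : List (Fin 3)) : tau (1 :: w) = 0 :: 2 :: tau w := rfl
@[simp] lemma tau_cons_two (w : List (Fin 3)) : tau (2 :: w) = 0 :: tau w := rfl

lemma tau_append (s t : List (Fin 3)) : tau (s ++ t) = tau s ++ tau t := by
  simp [tau]

lemma length_tau (w : List (Fin 3)) : (tau w).length = w.length + w.countP (· ≠ 2) := by
  induction w with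
  | nil => rfl
  | cons a w ih => fin_cases a <;> simp [ih] <;> omega

lemma getD_tau_zero (w : List (Fin 3)) : (tau w).getD 0 0 = 0 := by
  cases w with
  | nil => rfl
  | cons a w => fin_cases a <;> rfl

/-- Positions past the end of `w` read as `0`, the default of `getD`, so they impose nothing. -/
def NoAdjacentNonzero (w : List (Fin 3)) : Prop :=
  ∀ n, w.getD n 0 = 0 ∨ w.getD (n + 1) 0 = 0

lemma noAdjacentNonzero_tau (w : List (Fin 3)) : NoAdjacentNonzero (tau w) := by
  induction w with
  | nil => simp [NoAdjacentNonzero]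
  | cons a w ih =>
    rintro (_ | _ | n) <;> fin_cases a <;>
      simp only [Fin.zero_eta, Fin.mk_one, Fin.reduceFinMk, tau_cons_zero, tau_cons_one,
        tau_cons_two, List.getD_cons_zero, List.getD_cons_succ, getD_tau_zero] <;>
      first | exact ih _ | simp

lemma getD_tau_one_ne_two {w : List (Fin 3)} (hw : w.getD 0 0 = 0) : (tau w).getD 1 0 ≠ 2 := by
  cases w with
  | nil => decide
  | cons b w => obtain rfl : b = 0 := hw; simp

lemma getD_tau_add_two_ne_two {w : List (Fin 3)} (hw : NoAdjacentNonzero w) {n : ℕ}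
    (hn : (tau w).getD n 0 = 2) : (tau w).getD (n + 2) 0 ≠ 2 := by
  induction w generalizing n with
  | nil => simp at hn
  | cons a w ih =>
    rcases n with _ | _ | n <;> fin_cases a <;>
      simp only [Fin.zero_eta, Fin.mk_one, Fin.reduceFinMk, tau_cons_zero, tau_cons_one,
        tau_cons_two, List.getD_cons_zero, List.getD_cons_succ, getD_tau_zero] at hn ⊢
    all_goals
      first
      | exact absurd hn (by decide)
      | exact ih (fun k => hw (k + 1)) hn
      | exact getD_tau_one_ne_two (by simpa using hw 0)

lemma two_le_countP_ne_two (a b c : Fin 3) (hab : a = 0 ∨ b = 0) (hbc : b = 0 ∨ c = 0)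
    (hac : a = 2 → c ≠ 2) : 2 ≤ [a, b, c].countP (· ≠ 2) := by
  revert a b c; decide

lemma iterate_tau_append (n : ℕ) (s t : List (Fin 3)) :
    tau^[n] (s ++ t) = tau^[n] s ++ tau^[n] t := by
  induction n generalizing s t with
  | zero => rfl
  | succ n ih => simp only [Function.iterate_succ_apply, tau_append, ih]

lemma iterate_tau_succ_zero (n : ℕ) : tau^[n + 1] [0] = tau^[n] [0] ++ tau^[n] [1] := by
  rw [Function.iterate_succ_apply, ← iterate_tau_append]; rfl

lemma length_le_length_iterate_tau (n : ℕ) (w : List (Fin 3)) :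
    w.length ≤ (tau^[n] w).length := by
  induction n with
  | zero => rfl
  | succ n ih => rw [Function.iterate_succ_apply', length_tau]; omega

lemma lt_length_iterate_tau_zero (n : ℕ) : n < (tau^[n] [0]).length := by
  induction n with
  | zero => simp
  | succ n ih =>
    have := length_le_length_iterate_tau n [1]
    rw [iterate_tau_succ_zero, List.length_append]
    simp only [List.length_singleton] at this
    omega

lemma iterate_tau_zero_prefix {m m' : ℕ} (h : m ≤ m') : tau^[m] [0] <+: tau^[m'] [0] := by
  induction h with
  | refl => exact List.prefix_refl _
  | step _ ih => exact ih.trans (iterate_tau_succ_zero _ ▸ List.prefix_append _ _)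

lemma getD_iterate_tau_zero {n m : ℕ} (h : n < m) : (tau^[m] [0]).getD n 0 = trib n := by
  obtain ⟨r, hr⟩ := iterate_tau_zero_prefix (m := n + 1) h
  have := lt_length_iterate_tau_zero (n + 1)
  rw [trib, ← hr, List.getD_append _ _ _ _ (by omega)]

lemma trib_eq_zero_or_trib_succ_eq_zero (n : ℕ) : trib n = 0 ∨ trib (n + 1) = 0 := by
  rw [← getD_iterate_tau_zero (m := n + 2) (by omega),
    ← getD_iterate_tau_zero (m := n + 2) (by omega), Function.iterate_succ_apply']
  exact noAdjacentNonzero_tau _ n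

lemma trib_add_two_ne_two {n : ℕ} (hn : trib n = 2) : trib (n + 2) ≠ 2 := by
  rw [← getD_iterate_tau_zero (m := n + 3) (by omega)] at hn ⊢
  rw [Function.iterate_succ_apply'] at hn ⊢
  refine getD_tau_add_two_ne_two ?_ hn
  rw [Function.iterate_succ_apply']
  exact noAdjacentNonzero_tau _

theorem tau_length_growth (u : List (Fin 3)) (hu : IsFactor u) (h3 : 3 ≤ u.length) :
    u.length + 2 ≤ (tau u).length := by
  obtain ⟨i, hu⟩ := hu
  have hprefix : u.take 3 = [trib i, trib (i + 1), trib (i + 2)] := by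
    rw [hu, ← List.map_take, List.take_range, min_eq_left h3]; rfl
  calc u.length + 2 ≤ u.length + (u.take 3).countP (· ≠ 2) := by
        rw [hprefix]
        gcongr
        exact two_le_countP_ne_two _ _ _ (trib_eq_zero_or_trib_succ_eq_zero i)
          (trib_eq_zero_or_trib_succ_eq_zero (i + 1)) trib_add_two_ne_two
    _ ≤ u.length + u.countP (· ≠ 2) := by gcongr; exact (List.take_sublist 3 u).countP_le
    _ = (tau u).length := (length_tau u).symm
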